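/- arXiv:1209.5821 — 2 statements merged into one kernel-verified Lean document; each statement's English description precedes it below -/
import Mathlib

section
/- If A and B are positive semidefinite symmetric matrices with the same kernel, and A ⪯ B (i.e., xᵀAx ≤ xᵀBx for all x), then the Moore-Penrose pseudoinverses satisfy B⁺ ⪯ A⁺. -/
/-!
Let `P = A⁺` and `Q = B⁺`. Since `ker A ⊆ ker B`, the orthogonal projection `P A` onto the range
of `A` fixes the range of `B`, which contains that of `Q`; hence `P A Q = Q` and `Q A P = Q`.
Expanding, `(Q - P) A (Q - P) + Q (B - A) Q = P - Q`, and both summands are positive semidefinite.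
-/

open Matrix

/-- `P` is a Moore-Penrose pseudoinverse of `A` (the four Penrose conditions). -/
def IsMoorePenrose {n : ℕ} (A P : Matrix (Fin n) (Fin n) ℝ) : Prop :=
  A * P * A = A ∧ P * A * P = P ∧ (A * P)ᵀ = A * P ∧ (P * A)ᵀ = P * A

namespace Matrix

variable {ι R : Type*} [Fintype ι]

lemma mul_eq_zero_of_ker_le {l m k : Type*} [Fintype k] [Semiring R]
    {A : Matrix m ι R} {B : Matrix l ι R} {C : Matrix ι k R}
    (hker : ∀ x, A *ᵥ x = 0 → B *ᵥ x = 0) (hAC : A * C = 0) : B * C = 0 := by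
  rw [ext_iff_mulVec]
  intro v
  rw [zero_mulVec, ← mulVec_mulVec]
  exact hker _ (by rw [mulVec_mulVec, hAC, zero_mulVec])

lemma posSemidef_sub_iff_dotProduct_mulVec_le [Ring R] [PartialOrder R] [StarRing R]
    [TrivialStar R] [IsOrderedAddMonoid R] {A B : Matrix ι ι R}
    (hA : A.IsHermitian) (hB : B.IsHermitian) :
    (B - A).PosSemidef ↔ ∀ x, x ⬝ᵥ A *ᵥ x ≤ x ⬝ᵥ B *ᵥ x := by
  simp only [posSemidef_iff_dotProduct_mulVec, hB.sub hA, true_and, star_trivial, sub_mulVec,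
    dotProduct_sub, sub_nonneg]

end Matrix

namespace IsMoorePenrose

variable {n : ℕ} {A B P Q : Matrix (Fin n) (Fin n) ℝ}

lemma transpose (h : IsMoorePenrose A P) : IsMoorePenrose Aᵀ Pᵀ := by
  obtain ⟨h₁, h₂, h₃, h₄⟩ := h
  refine ⟨?_, ?_, ?_, ?_⟩
  · rw [← transpose_mul, ← transpose_mul, ← mul_assoc, h₁]
  · rw [← transpose_mul, ← transpose_mul, ← mul_assoc, h₂]
  · rw [← transpose_mul, transpose_transpose, h₄]
  · rw [← transpose_mul, transpose_transpose, h₃]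

lemma unique (hP : IsMoorePenrose A P) (hQ : IsMoorePenrose A Q) : P = Q := by
  obtain ⟨hP₁, hP₂, hP₃, hP₄⟩ := hP
  obtain ⟨hQ₁, hQ₂, hQ₃, hQ₄⟩ := hQ
  have hAP : A * P = A * Q :=
    calc A * P = (A * Q) * (A * P) := by rw [← mul_assoc, hQ₁]
    _ = ((A * P) * (A * Q))ᵀ := by rw [transpose_mul, hP₃, hQ₃]
    _ = A * Q := by rw [← mul_assoc, hP₁, hQ₃]
  have hPA : P * A = Q * A :=
    calc P * A = (P * A) * (Q * A) := by rw [mul_assoc, ← mul_assoc A, hQ₁]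
    _ = ((Q * A) * (P * A))ᵀ := by rw [transpose_mul, hP₄, hQ₄]
    _ = Q * A := by rw [mul_assoc, ← mul_assoc A, hP₁, hQ₄]
  calc P = P * A * P := hP₂.symm
  _ = Q * A * Q := by rw [hPA, mul_assoc, hAP, ← mul_assoc]
  _ = Q := hQ₂

lemma isSymm (hA : A.IsSymm) (h : IsMoorePenrose A P) : P.IsSymm := by
  have h' := h.transpose
  rw [hA.eq] at h'
  exact h'.unique h

lemma mul_comm (hA : A.IsSymm) (h : IsMoorePenrose A P) : P * A = A * P := by
  rw [← h.2.2.2, transpose_mul, hA.eq, (h.isSymm hA).eq]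

lemma mul_mul_eq_of_ker_le (hB : B.IsSymm)
    (hker : ∀ x, A *ᵥ x = 0 → B *ᵥ x = 0) (hP : IsMoorePenrose A P) (hQ : IsMoorePenrose B Q) :
    P * A * Q = Q := by
  have hBPA : B * (P * A) = B := by
    have hA_proj : A * (1 - P * A) = 0 := by rw [mul_sub, mul_one, ← mul_assoc, hP.1, sub_self]
    have := mul_eq_zero_of_ker_le hker hA_proj
    rwa [mul_sub, mul_one, sub_eq_zero, eq_comm] at this
  have hPAB : P * A * B = B := by
    simpa only [transpose_mul, hP.2.2.2, hB.eq] using congrArg Matrix.transpose hBPA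
  have hQ' : B * Q * Q = Q := by rw [← hQ.mul_comm hB, hQ.2.1]
  calc P * A * Q = P * A * (B * Q * Q) := by rw [hQ']
  _ = (P * A * B) * Q * Q := by simp only [mul_assoc]
  _ = Q := by rw [hPAB, hQ']

end IsMoorePenrose

/-- If `A` and `B` are PSD symmetric matrices with the same kernel and `A ⪯ B`,
then `B⁺ ⪯ A⁺`. -/
theorem stmt_0 {n : ℕ} (A B Ap Bp : Matrix (Fin n) (Fin n) ℝ)
    (hA : A.PosSemidef) (hB : B.PosSemidef)
    (hker : ∀ x : Fin n → ℝ, A.mulVec x = 0 ↔ B.mulVec x = 0)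
    (hAB : ∀ x : Fin n → ℝ, x ⬝ᵥ A.mulVec x ≤ x ⬝ᵥ B.mulVec x)
    (hAp : IsMoorePenrose A Ap) (hBp : IsMoorePenrose B Bp) :
    ∀ x : Fin n → ℝ, x ⬝ᵥ Bp.mulVec x ≤ x ⬝ᵥ Ap.mulVec x := by
  have hAs : A.IsSymm := isHermitian_iff_isSymm.mp hA.isHermitian
  have hBs : B.IsSymm := isHermitian_iff_isSymm.mp hB.isHermitian
  have hAps := hAp.isSymm hAs
  have hBps := hBp.isSymm hBs
  have hBA : (B - A).PosSemidef :=
    (posSemidef_sub_iff_dotProduct_mulVec_le hA.isHermitian hB.isHermitian).mpr hAB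
  have hfix : Ap * A * Bp = Bp := hAp.mul_mul_eq_of_ker_le hBs (fun x ↦ (hker x).mp) hBp
  have hfix' : Bp * A * Ap = Bp := by
    simpa only [transpose_mul, hAs.eq, hAps.eq, hBps.eq, mul_assoc] using congrArg transpose hfix
  rw [← posSemidef_sub_iff_dotProduct_mulVec_le (isHermitian_iff_isSymm.mpr hBps)
    (isHermitian_iff_isSymm.mpr hAps)]
  have hsum := (hA.conjTranspose_mul_mul_same (Bp - Ap)).add (hBA.conjTranspose_mul_mul_same Bp)
  rw [conjTranspose_eq_transpose_of_trivial, conjTranspose_eq_transpose_of_trivial,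
    transpose_sub, hAps.eq, hBps.eq] at hsum
  convert hsum using 1
  calc Ap - Bp = Bp * A * Bp - Bp * A * Ap - Ap * A * Bp + Ap * A * Ap
      + (Bp * B * Bp - Bp * A * Bp) := by rw [hfix, hfix', hAp.2.1, hBp.2.1]; abel
  _ = (Bp - Ap) * A * (Bp - Ap) + Bp * (B - A) * Bp := by noncomm_ring
end

section
/- The sum over all edges e = (i,j) of w_e times the effective resistance R^G(i,j) equals n − 1, for any connected weighted graph G on n vertices. -/
open Matrix

/-!
Writing `L = ∑ₑ wₑ bₑ bₑᵀ`, the sum `∑ₑ wₑ bₑᵀ L⁺ bₑ` is `tr (L⁺ L)`. Since `L L⁺ L = L`, every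
`x - L⁺ L x` lies in `ker L`, the constant vectors, so `L⁺ L = I - 𝟙 cᵀ` for some `c`; and
`L⁺ L 𝟙 = 0` forces `cᵀ 𝟙 = 1`. Hence `tr (L⁺ L) = n - cᵀ 𝟙 = n - 1`.
-/

namespace Matrix

variable {ι κ R : Type*} [Fintype ι]

theorem sum_mul_dotProduct_mulVec_eq_trace_mul [Fintype κ] [CommSemiring R]
    (A : Matrix ι ι R) (w : κ → R) (b : κ → ι → R) :
    ∑ e, w e * (b e ⬝ᵥ A *ᵥ b e) = trace (A * ∑ e, w e • vecMulVec (b e) (b e)) := by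
  simp only [Matrix.mul_sum, Matrix.mul_smul, trace_sum, trace_smul, mul_vecMulVec,
    trace_vecMulVec, dotProduct_comm (A *ᵥ _), smul_eq_mul]

theorem mulVec_sub_mul_mulVec_eq_zero [Ring R] {L M : Matrix ι ι R} (h : L * M * L = L)
    (x : ι → R) : L *ᵥ (x - (M * L) *ᵥ x) = 0 := by
  rw [mulVec_sub, mulVec_mulVec, ← Matrix.mul_assoc, h, sub_self]

theorem exists_eq_one_sub_vecMulVec_one [DecidableEq ι] [Ring R] {P : Matrix ι ι R}
    (h : ∀ x, ∃ a, ∀ k, (x - P *ᵥ x) k = a) : ∃ c : ι → R, P = 1 - vecMulVec 1 c := by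
  choose c hc using fun j => h (Pi.single j 1)
  refine ⟨c, Matrix.ext fun i j => ?_⟩
  have hcol := hc j i
  rw [Pi.sub_apply, mulVec_single_one, col_apply] at hcol
  simp only [sub_apply, vecMulVec_apply, Pi.one_apply, one_mul, one_apply,
    Pi.single_apply] at hcol ⊢
  rw [← hcol, sub_sub_cancel]

theorem trace_one_sub_vecMulVec_one [DecidableEq ι] [Nonempty ι] [CommRing R] {c : ι → R}
    (h : (1 - vecMulVec 1 c : Matrix ι ι R) *ᵥ 1 = 0) :
    trace (1 - vecMulVec 1 c : Matrix ι ι R) = Fintype.card ι - 1 := by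
  obtain ⟨i⟩ := ‹Nonempty ι›
  have hsum : c ⬝ᵥ 1 = 1 := by
    have hi := congrFun h i
    simp only [sub_mulVec, one_mulVec, vecMulVec_mulVec, Pi.sub_apply, Pi.smul_apply,
      Pi.one_apply, Pi.zero_apply, MulOpposite.smul_eq_mul_unop, MulOpposite.unop_op, one_mul] at hi
    linear_combination -hi
  rw [trace_sub, trace_one, trace_vecMulVec, dotProduct_comm, hsum]

end Matrix

theorem stmt_8_general {m n : ℕ} (hn : 0 < n) (u v : Fin m → Fin n) (w : Fin m → ℝ)
    (L Lp : Matrix (Fin n) (Fin n) ℝ)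
    (hL : L = ∑ e : Fin m, w e •
      Matrix.vecMulVec ((Pi.single (u e) 1 - Pi.single (v e) 1 : Fin n → ℝ))
        ((Pi.single (u e) 1 - Pi.single (v e) 1 : Fin n → ℝ)))
    (hconn : ∀ x : Fin n → ℝ, L.mulVec x = 0 ↔ ∃ c : ℝ, ∀ k, x k = c)
    (hLp : IsMoorePenrose L Lp) :
    ∑ e : Fin m, w e *
      ((Pi.single (u e) 1 - Pi.single (v e) 1 : Fin n → ℝ) ⬝ᵥ
        Lp.mulVec (Pi.single (u e) 1 - Pi.single (v e) 1)) = (n : ℝ) - 1 := by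
  refine (sum_mul_dotProduct_mulVec_eq_trace_mul Lp w
    fun e => Pi.single (u e) 1 - Pi.single (v e) 1).trans ?_
  rw [← hL]
  obtain ⟨c, hc⟩ := exists_eq_one_sub_vecMulVec_one fun x =>
    (hconn _).1 (mulVec_sub_mul_mulVec_eq_zero hLp.1 x)
  have hone : (Lp * L) *ᵥ 1 = 0 := by
    rw [← mulVec_mulVec, (hconn 1).2 ⟨1, fun _ => rfl⟩, mulVec_zero]
  have : Nonempty (Fin n) := Fin.pos_iff_nonempty.1 hn
  rw [hc] at hone ⊢
  rw [trace_one_sub_vecMulVec_one hone, Fintype.card_fin]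

/-- The sum over all edges of `w_e · R^G(i,j)` equals `n - 1` for a connected
weighted graph on `n` vertices with Laplacian `L = Σ_e w_e b_e b_eᵀ`. -/
theorem stmt_8 {m n : ℕ} (hn : 0 < n) (u v : Fin m → Fin n) (w : Fin m → ℝ)
    (hw : ∀ e, 0 < w e) (hne : ∀ e, u e ≠ v e)
    (L Lp : Matrix (Fin n) (Fin n) ℝ)
    (hL : L = ∑ e : Fin m, w e •
      Matrix.vecMulVec ((Pi.single (u e) 1 - Pi.single (v e) 1 : Fin n → ℝ))
        ((Pi.single (u e) 1 - Pi.single (v e) 1 : Fin n → ℝ)))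
    (hconn : ∀ x : Fin n → ℝ, L.mulVec x = 0 ↔ ∃ c : ℝ, ∀ k, x k = c)
    (hLp : IsMoorePenrose L Lp) :
    ∑ e : Fin m, w e *
      ((Pi.single (u e) 1 - Pi.single (v e) 1 : Fin n → ℝ) ⬝ᵥ
        Lp.mulVec (Pi.single (u e) 1 - Pi.single (v e) 1)) = (n : ℝ) - 1 :=
  stmt_8_general hn u v w L Lp hL hconn hLp
end
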